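/- Let G be a group, N ⊴ G of finite index, k algebraically closed of characteristic p with p ∤ [G:N], and L an irreducible finite-dimensional N-representation whose stabilizer is all of G. Then the twisted group algebra 𝒜 ≅ End_G(Ind_N^G(L))^{op} is a semisimple k-algebra. -/

import Mathlib

section CliffordDefs

variable {k G V : Type*} [Field k] [Group G] [AddCommGroup V] [Module k V]

/-- A `k`-submodule `W` is stable under the elements of `S` acting through `ρ`. -/
def repStable (ρ : Representation k G V) (S : Set G) (W : Submodule k V) : Prop :=
  ∀ g ∈ S, ∀ v ∈ W, ρ g v ∈ W

/-- The representation `ρ` is irreducible (simple). -/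
def repIrreducible (ρ : Representation k G V) : Prop :=
  Nontrivial V ∧ ∀ W : Submodule k V, repStable ρ Set.univ W → W = ⊥ ∨ W = ⊤

end CliffordDefs

/-!
Comparing the two ways of rewriting `θ_d θ_b θ_a` as a multiple of `θ_{abd}` by means of the
relations `hθ` and `hα`, and evaluating on a nonzero vector, shows that `α` is a normalized
2-cocycle. The twisted group algebra `k^α[A]` is realized through its left regular
representation on `A → k`, where the left multiplications `λ_a` by the basis vectors form a
projective representation of `A` spanning it.
Maschke's averaging `x ↦ |A|⁻¹ ∑ₐ λ_a π(λ_a⁻¹ x)` of a `k`-linear projection `π` onto a submodule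
is still equivariant, because the scalars in `λ_e λ_b = α(e, b) λ_{eb}` cancel; hence `k^α[A]` is
semisimple, and Wedderburn–Artin over the algebraically closed `k` makes it a product of matrix
algebras.
-/

section ProjectiveMaschke

variable {k B M A : Type*} [Field k] [Ring B] [Algebra k B]
  [AddCommGroup M] [Module B M] [Module k M] [IsScalarTower k B M] [Fintype A]

noncomputable def sumConj (u : A → Bˣ) (f : M →ₗ[k] M) : M →ₗ[k] M :=
  ∑ a, DistribSMul.toLinearMap k M (u a : B) ∘ₗ f ∘ₗ DistribSMul.toLinearMap k M (↑(u a)⁻¹ : B)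

lemma sumConj_apply (u : A → Bˣ) (f : M →ₗ[k] M) (x : M) :
    sumConj u f x = ∑ a, (u a : B) • f ((↑(u a)⁻¹ : B) • x) := by
  simp [sumConj]

lemma sumConj_mem (u : A → Bˣ) {f : M →ₗ[k] M} {p : Submodule B M} (hf : ∀ x, f x ∈ p)
    (x : M) : sumConj u f x ∈ p := by
  rw [sumConj_apply]
  exact p.sum_mem fun a _ => p.smul_mem _ (hf _)

lemma sumConj_apply_of_mem (u : A → Bˣ) {f : M →ₗ[k] M} {p : Submodule B M}
    (hf : ∀ x ∈ p, f x = x) {x : M} (hx : x ∈ p) : sumConj u f x = Nat.card A • x := by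
  simp [sumConj_apply, hf _ (p.smul_mem _ hx), smul_smul]

variable [Group A] {u : A → Bˣ} (hu : ∀ a b, ∃ c : k, (u a * u b : B) = c • (u (a * b) : B))
include hu

lemma sumConj_units_smul (f : M →ₗ[k] M) (e : A) (x : M) :
    sumConj u f ((u e : B) • x) = (u e : B) • sumConj u f x := by
  simp only [sumConj_apply, Finset.smul_sum]
  refine (Fintype.sum_equiv (Equiv.mulLeft e) _ _ fun b => ?_).symm
  obtain ⟨c, hc⟩ := hu e b
  have hinv : (↑(u (e * b))⁻¹ * u e : B) = c • (↑(u b)⁻¹ : B) := calc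
    _ = (↑(u (e * b))⁻¹ * (u e * u b) * ↑(u b)⁻¹ : B) := by simp [mul_assoc]
    _ = c • (↑(u b)⁻¹ : B) := by rw [hc, mul_smul_comm, Units.inv_mul, smul_mul_assoc, one_mul]
  show (u e : B) • (u b : B) • _ = (u (e * b) : B) • f ((↑(u (e * b))⁻¹ : B) • (u e : B) • x)
  rw [smul_smul _ (u e : B), hinv, smul_assoc c, map_smul f c, smul_comm (u (e * b) : B) c,
    ← smul_assoc c (u (e * b) : B), ← hc, mul_smul]

lemma sumConj_smul (hspan : Submodule.span k (Set.range fun a => (u a : B)) = ⊤)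
    (f : M →ₗ[k] M) (b : B) (x : M) : sumConj u f (b • x) = b • sumConj u f x := by
  have hb : b ∈ Submodule.span k (Set.range fun a => (u a : B)) := hspan ▸ Submodule.mem_top
  induction hb using Submodule.span_induction with
  | mem b hb =>
    obtain ⟨e, rfl⟩ := hb
    exact sumConj_units_smul hu f e x
  | zero => simp
  | add b c _ _ hb hc => rw [add_smul, map_add, hb, hc, add_smul]
  | smul c b _ hb => rw [smul_assoc, map_smul, hb, smul_assoc]

theorem isSemisimpleModule_of_span_units (hA : (Nat.card A : k) ≠ 0)
    (hspan : Submodule.span k (Set.range fun a => (u a : B)) = ⊤) : IsSemisimpleModule B M := by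
  refine (isSemisimpleModule_iff B M).mpr ⟨fun p => ?_⟩
  obtain ⟨g, hg⟩ := LinearMap.exists_leftInverse_of_injective ((p.restrictScalars k).subtype)
    (Submodule.ker_subtype _)
  let f : M →ₗ[k] M := (p.restrictScalars k).subtype ∘ₗ g
  have hf_mem : ∀ x, f x ∈ p := fun x => (g x).2
  have hf_id : ∀ x ∈ p, f x = x := fun x hx =>
    congrArg Subtype.val (LinearMap.congr_fun hg ⟨x, hx⟩)
  let P : M →ₗ[B] M :=
    { toFun := fun x => (Nat.card A : k)⁻¹ • sumConj u f x
      map_add' := by simp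
      map_smul' := fun b x => by rw [sumConj_smul hu hspan, RingHom.id_apply, smul_comm] }
  have hP : LinearMap.IsProj p P :=
    ⟨fun x => p.smul_of_tower_mem _ (sumConj_mem u hf_mem x), fun x hx => by
      change (Nat.card A : k)⁻¹ • sumConj u f x = x
      rw [sumConj_apply_of_mem u hf_id hx, ← Nat.cast_smul_eq_nsmul k, smul_smul,
        inv_mul_cancel₀ hA, one_smul]⟩
  exact ⟨_, hP.isCompl⟩

end ProjectiveMaschke

structure IsNormalizedTwoCocycle {k A : Type*} [Field k] [Monoid A] (α : A → A → kˣ) : Prop where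
  cocycle : ∀ a b c, α a b * α (a * b) c = α b c * α a (b * c)
  one_one : α 1 1 = 1

namespace IsNormalizedTwoCocycle

variable {k A : Type*} [Field k] {α : A → A → kˣ}

lemma one_left [Monoid A] (hα : IsNormalizedTwoCocycle α) (b : A) : α 1 b = 1 := by
  simpa [hα.one_one] using hα.cocycle 1 1 b

lemma one_right [Monoid A] (hα : IsNormalizedTwoCocycle α) (a : A) : α a 1 = 1 := by
  simpa [hα.one_one] using (hα.cocycle a 1 1).symm

lemma inv_left [Group A] (hα : IsNormalizedTwoCocycle α) (a : A) : α a⁻¹ a = α a a⁻¹ := by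
  simpa [hα.one_left, hα.one_right] using (hα.cocycle a a⁻¹ a).symm

theorem of_intertwiners {V P : Type*} [AddCommGroup V] [Module k V] [Nontrivial V] [Monoid P]
    [Monoid A] (ρ : Representation k P V) (θ : A → V ≃ₗ[k] V) (n : A → A → P) (σ : A → P → P)
    (hθ1 : θ 1 = LinearEquiv.refl k V) (hn1 : n 1 1 = 1)
    (hθ : ∀ a m v, θ a (ρ m v) = ρ (σ a m) (θ a v))
    (hα : ∀ a b v, ρ (n a b) (θ b (θ a v)) = (α a b : k) • θ (a * b) v)
    (hn : ∀ a b d, n (a * b) d * σ d (n a b) = n a (b * d) * n b d) :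
    IsNormalizedTwoCocycle α := by
  obtain ⟨v, hv⟩ := exists_ne (0 : V)
  constructor
  · intro a b d
    have key : (α a b * α (a * b) d : k) • θ (a * b * d) v =
        (α b d * α a (b * d) : k) • θ (a * b * d) v := calc
      _ = ρ (n (a * b) d) (θ d (ρ (n a b) (θ b (θ a v)))) := by
        rw [hα a b, map_smul, map_smul, hα, smul_smul]
      _ = ρ (n (a * b) d * σ d (n a b)) (θ d (θ b (θ a v))) := by rw [hθ, map_mul]; rfl
      _ = ρ (n a (b * d)) (ρ (n b d) (θ d (θ b (θ a v)))) := by rw [hn, map_mul]; rfl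
      _ = _ := by rw [hα b d, map_smul, hα a (b * d), smul_smul, mul_assoc]
    exact Units.ext (by simpa using smul_left_injective k ((θ _).map_ne_zero_iff.mpr hv) key)
  · have h := hα 1 1 v
    rw [hn1, mul_one, hθ1, map_one] at h
    exact Units.ext (smul_left_injective k hv (by simpa using h.symm))

end IsNormalizedTwoCocycle

section SectionDefect

variable {G : Type*} [Group G] {N : Subgroup G} [hN : N.Normal]

variable (N) in
def normalConj (g : G) (m : N) : N :=
  ⟨g⁻¹ * m * g, by simpa using hN.conj_mem _ m.2 g⁻¹⟩

def sectionDefect (ι : G ⧸ N → G) (hι : ∀ a, QuotientGroup.mk' N (ι a) = a) (a b : G ⧸ N) : N :=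
  ⟨(ι (a * b))⁻¹ * ι a * ι b, by
    rw [mul_assoc, ← QuotientGroup.eq]
    simp_all⟩

variable (ι : G ⧸ N → G) (hι : ∀ a, QuotientGroup.mk' N (ι a) = a)

lemma sectionDefect_one_one (hι1 : ι 1 = 1) : sectionDefect ι hι 1 1 = 1 :=
  Subtype.ext (by simp [sectionDefect, hι1])

lemma sectionDefect_mul_normalConj (a b d : G ⧸ N) :
    sectionDefect ι hι (a * b) d * normalConj N (ι d) (sectionDefect ι hι a b) =
      sectionDefect ι hι a (b * d) * sectionDefect ι hι b d :=
  Subtype.ext (by simp only [sectionDefect, normalConj, Subgroup.coe_mul, mul_assoc a b d]; group)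

end SectionDefect

section TwistedGroupAlgebra

variable {k A : Type*} [Field k] [Group A] (α : A → A → kˣ)

def twistedShift (a : A) : (A → k) →ₗ[k] (A → k) where
  toFun y c := (α a (a⁻¹ * c) : k) * y (a⁻¹ * c)
  map_add' y z := by funext c; simp [mul_add]
  map_smul' r y := by funext c; simp [mul_left_comm]

lemma twistedShift_single [DecidableEq A] (a b : A) (r : k) :
    twistedShift α a (Pi.single b r) = Pi.single (a * b) (α a b * r) := by
  funext c
  by_cases h : c = a * b
  · subst h; simp [twistedShift]
  · have : a⁻¹ * c ≠ b := fun h' => h (by rw [← h', mul_inv_cancel_left])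
    simp [twistedShift, h, this]

variable {α}

lemma twistedShift_mul (hα : IsNormalizedTwoCocycle α) (a b : A) :
    twistedShift α a * twistedShift α b = (α a b : k) • twistedShift α (a * b) := by
  refine LinearMap.ext fun y => funext fun c => ?_
  obtain ⟨d, rfl⟩ : ∃ d, c = a * b * d := ⟨(a * b)⁻¹ * c, by group⟩
  have h := congrArg Units.val (hα.cocycle a b d)
  simp only [Units.val_mul] at h
  simp [twistedShift, mul_assoc]
  linear_combination (-y d) * h

lemma twistedShift_one (hα : IsNormalizedTwoCocycle α) : twistedShift α 1 = 1 := by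
  ext y c
  simp [twistedShift, hα.one_left]

variable [Fintype A] (α)

def twistedConv (x y : A → k) : A → k :=
  fun c => ∑ a, (α a (a⁻¹ * c) : k) * x a * y (a⁻¹ * c)

noncomputable def twistedRegular : (A → k) →ₗ[k] Module.End k (A → k) :=
  Fintype.linearCombination k (twistedShift α)

lemma twistedRegular_apply (x y : A → k) : twistedRegular α x y = twistedConv α x y := by
  funext c
  simp only [twistedRegular, Fintype.linearCombination_apply, twistedConv, LinearMap.sum_apply,
    Finset.sum_apply, LinearMap.smul_apply, Pi.smul_apply, twistedShift, LinearMap.coe_mk,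
    AddHom.coe_mk, smul_eq_mul]
  exact Finset.sum_congr rfl fun a _ => by ring

lemma twistedRegular_single [DecidableEq A] (a : A) (r : k) :
    twistedRegular α (Pi.single a r) = r • twistedShift α a := by
  simp [twistedRegular]

variable {α}

lemma twistedShift_mem_range (a : A) : twistedShift α a ∈ LinearMap.range (twistedRegular α) := by
  classical
  exact ⟨Pi.single a 1, by rw [twistedRegular_single, one_smul]⟩

variable (hα : IsNormalizedTwoCocycle α)
include hα

lemma twistedRegular_apply_single_one [DecidableEq A] (x : A → k) :
    twistedRegular α x (Pi.single 1 1) = x := by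
  have hx : twistedRegular α x = ∑ a, x a • twistedShift α a :=
    Fintype.linearCombination_apply k (twistedShift α) x
  ext c
  simp [hx, twistedShift_single, hα.one_right, Pi.single_apply]

lemma twistedRegular_injective : Function.Injective (twistedRegular α) := by
  classical
  intro x y hxy
  rw [← twistedRegular_apply_single_one hα x, hxy, twistedRegular_apply_single_one hα]

lemma twistedRegular_twistedShift (a : A) (y : A → k) :
    twistedRegular α (twistedShift α a y) = twistedShift α a * twistedRegular α y := by
  classical
  suffices twistedRegular α ∘ₗ twistedShift α a =
      LinearMap.mulLeft k (twistedShift α a) ∘ₗ twistedRegular α from LinearMap.congr_fun this y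
  refine LinearMap.pi_ext fun b r => ?_
  simp [twistedShift_single, twistedRegular_single, twistedShift_mul hα, smul_smul, mul_comm]

lemma twistedRegular_twistedConv (x y : A → k) :
    twistedRegular α (twistedConv α x y) = twistedRegular α x * twistedRegular α y := by
  have hx : twistedRegular α x = ∑ a, x a • twistedShift α a :=
    Fintype.linearCombination_apply k (twistedShift α) x
  rw [← twistedRegular_apply, hx, LinearMap.sum_apply, map_sum, Finset.sum_mul]
  refine Finset.sum_congr rfl fun a _ => ?_
  rw [LinearMap.smul_apply, map_smul, twistedRegular_twistedShift hα, smul_mul_assoc]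

noncomputable def twistedGroupAlgebra : Subalgebra k (Module.End k (A → k)) :=
  (LinearMap.range (twistedRegular α)).toSubalgebra
    (by rw [← twistedShift_one hα]; exact twistedShift_mem_range (1 : A))
    (by
      rintro _ _ ⟨x, rfl⟩ ⟨y, rfl⟩
      exact ⟨twistedConv α x y, twistedRegular_twistedConv hα x y⟩)

noncomputable def twistedGroupAlgebraEquiv : (A → k) ≃ₗ[k] twistedGroupAlgebra hα :=
  LinearEquiv.ofInjective (twistedRegular α) (twistedRegular_injective hα)

lemma twistedGroupAlgebraEquiv_twistedConv (x y : A → k) :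
    twistedGroupAlgebraEquiv hα (twistedConv α x y) =
      twistedGroupAlgebraEquiv hα x * twistedGroupAlgebraEquiv hα y :=
  Subtype.ext (twistedRegular_twistedConv hα x y)

lemma twistedGroupAlgebraEquiv_single_one [DecidableEq A] :
    twistedGroupAlgebraEquiv hα (Pi.single 1 1) = 1 :=
  Subtype.ext <| show twistedRegular α (Pi.single 1 1) = 1 by
    rw [twistedRegular_single, one_smul, twistedShift_one hα]

noncomputable def twistedUnit (a : A) : (twistedGroupAlgebra hα)ˣ where
  val := ⟨twistedShift α a, twistedShift_mem_range a⟩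
  inv := ⟨(α a a⁻¹ : k)⁻¹ • twistedShift α a⁻¹,
    Subalgebra.smul_mem _ (twistedShift_mem_range a⁻¹) _⟩
  val_inv := Subtype.ext <| by
    simp [twistedShift_mul hα, twistedShift_one hα]
  inv_val := Subtype.ext <| by
    simp [twistedShift_mul hα, twistedShift_one hα, hα.inv_left]

lemma span_twistedUnit :
    Submodule.span k (Set.range fun a => (twistedUnit hα a : twistedGroupAlgebra hα)) = ⊤ := by
  refine Submodule.eq_top_iff'.mpr fun ⟨_, x, rfl⟩ => ?_
  refine (Submodule.mem_span_range_iff_exists_fun k).mpr ⟨x, Subtype.ext ?_⟩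
  simp [twistedUnit, twistedRegular, Fintype.linearCombination_apply]

lemma isSemisimpleRing_twistedGroupAlgebra (hA : (Nat.card A : k) ≠ 0) :
    IsSemisimpleRing (twistedGroupAlgebra hα) :=
  isSemisimpleModule_of_span_units (u := twistedUnit hα)
    (fun a b => ⟨(α a b : k), Subtype.ext (twistedShift_mul hα a b)⟩) hA (span_twistedUnit hα)

theorem IsNormalizedTwoCocycle.exists_linearEquiv_pi_matrix [IsAlgClosed k] [DecidableEq A]
    (hA : (Nat.card A : k) ≠ 0) :
    ∃ (r : ℕ) (n : Fin r → ℕ) (e : (A → k) ≃ₗ[k] Π i : Fin r, Matrix (Fin (n i)) (Fin (n i)) k),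
      (∀ x y, e (twistedConv α x y) = e x * e y) ∧ e (Pi.single 1 1) = 1 := by
  have := isSemisimpleRing_twistedGroupAlgebra hα hA
  obtain ⟨r, n, -, ⟨E⟩⟩ :=
    IsSemisimpleRing.exists_algEquiv_pi_matrix_of_isAlgClosed k (twistedGroupAlgebra hα)
  refine ⟨r, n, (twistedGroupAlgebraEquiv hα).trans E.toLinearEquiv, fun x y => ?_, ?_⟩
  · simp [twistedGroupAlgebraEquiv_twistedConv]
  · simp [twistedGroupAlgebraEquiv_single_one]

end TwistedGroupAlgebra

/-- Let `N ⊴ G` of finite index, `k` algebraically closed with characteristic not dividing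
`[G : N]`, and `L = (V, ρ)` an irreducible finite-dimensional `N`-representation whose
stabilizer is all of `G`, with isomorphisms `θ_a : L ≅ {}^{ι a}L` and associated
normalized 2-cocycle `α`.  Then the twisted group algebra `𝒜 ≅ End_G(Ind_N^G L)^op`
(realized as the twisted convolution product on `A → k`) is a semisimple `k`-algebra — in
fact isomorphic to a finite product of matrix algebras over `k`. -/
theorem twisted_group_algebra_semisimple {k G V : Type*} [Field k] [IsAlgClosed k]
    [Group G] [AddCommGroup V] [Module k V]
    (N : Subgroup G) [hN : N.Normal] [Fintype (G ⧸ N)] [DecidableEq (G ⧸ N)]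
    (hchar : ¬ (ringChar k ∣ Nat.card (G ⧸ N)))
    (ρ : Representation k N V) (hirr : repIrreducible ρ)
    (ι : G ⧸ N → G) (hι : ∀ a, QuotientGroup.mk' N (ι a) = a) (hι1 : ι 1 = 1)
    (θ : G ⧸ N → (V ≃ₗ[k] V)) (hθ1 : θ 1 = LinearEquiv.refl k V)
    (hθ : ∀ (a : G ⧸ N) (n : N) (v : V),
      θ a (ρ n v) =
        ρ ⟨(ι a)⁻¹ * ↑n * ι a, by simpa using hN.conj_mem _ n.2 (ι a)⁻¹⟩ (θ a v))
    (α : G ⧸ N → G ⧸ N → kˣ)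
    (hα : ∀ (a b : G ⧸ N) (v : V),
      ρ ⟨(ι (a * b))⁻¹ * ι a * ι b, by
          rw [← QuotientGroup.eq_one_iff]
          show (QuotientGroup.mk' N) ((ι (a * b))⁻¹ * ι a * ι b) = 1
          simp only [map_mul, map_inv, hι]
          group⟩
        (θ b (θ a v)) = (α a b : k) • θ (a * b) v)
    (mulA : ((G ⧸ N) → k) → ((G ⧸ N) → k) → ((G ⧸ N) → k))
    (hmulA : ∀ x y c, mulA x y c = ∑ a : G ⧸ N, (α a (a⁻¹ * c) : k) * x a * y (a⁻¹ * c)) :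
    ∃ (r : ℕ) (n : Fin r → ℕ)
      (e : ((G ⧸ N) → k) ≃ₗ[k] (Π i : Fin r, Matrix (Fin (n i)) (Fin (n i)) k)),
      (∀ x y, e (mulA x y) = e x * e y) ∧
      e (fun c => if c = 1 then 1 else 0) = 1 := by
  have := hirr.1
  have hcoc : IsNormalizedTwoCocycle α :=
    .of_intertwiners ρ θ (sectionDefect ι hι) (fun a => normalConj N (ι a)) hθ1
      (sectionDefect_one_one ι hι hι1) hθ hα (sectionDefect_mul_normalConj ι hι)
  obtain ⟨r, n, e, he_mul, he_one⟩ :=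
    hcoc.exists_linearEquiv_pi_matrix ((ringChar.spec k _).not.mpr hchar)
  refine ⟨r, n, e, fun x y => ?_, ?_⟩
  · rw [show mulA x y = twistedConv α x y from funext (hmulA x y), he_mul]
  · convert he_one using 2
    funext c
    simp [Pi.single_apply]
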